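/- Let R, R_a ∈ SO(3) and let x := R e₁ and m_d := R_a e₁ be their first columns (so x, m_d are unit vectors). Then the angle δ := arccos(xᵀ m_d) between the first columns is at most the rotation angle of the attitude error matrix: arccos(xᵀ m_d) ≤ arccos((tr(R_aᵀ R) − 1)/2); equivalently cos δ ≥ cos θ(R_aᵀ R). -/

import Mathlib

open Matrix Real

/-- `SO3 R` means `R` is a rotation matrix: `Rᵀ R = I` and `det R = 1`. -/
def SO3 (R : Matrix (Fin 3) (Fin 3) ℝ) : Prop := Rᵀ * R = 1 ∧ R.det = 1

/-- The rotation angle `θ(R) = arccos((tr R − 1)/2)` of a rotation matrix. -/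
noncomputable def rotAngle (R : Matrix (Fin 3) (Fin 3) ℝ) : ℝ :=
  Real.arccos ((R.trace - 1) / 2)

/-!
Write `E := R_aᵀ R`, again a rotation, so that `xᵀ m_d = E₀₀` and the claim is
`(tr E − 1)/2 ≤ E₀₀` (`arccos` is antitone, `cos` antitone on `[0, π]`). Since `Eᵀ = E⁻¹` is the
adjugate of `E`, its diagonal entries are the corresponding 2×2 minors; together with the unit
column norms this gives `p (4 − p) = (E₂₁ − E₁₂)² + (E₀₁ + E₁₀)² + (E₀₂ + E₂₀)²` for
`p = 1 + E₀₀ − E₁₁ − E₂₂`, hence `p ≥ 0`.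
-/

theorem SO3.transpose_mul {A B : Matrix (Fin 3) (Fin 3) ℝ} (hA : SO3 A) (hB : SO3 B) :
    SO3 (Aᵀ * B) := by
  have hA' : A * Aᵀ = 1 := mul_eq_one_comm.mp hA.1
  refine ⟨?_, ?_⟩
  · calc (Aᵀ * B)ᵀ * (Aᵀ * B) = Bᵀ * (A * Aᵀ) * B := by
          simp only [Matrix.transpose_mul, transpose_transpose, Matrix.mul_assoc]
      _ = 1 := by rw [hA', Matrix.mul_one, hB.1]
  · rw [det_mul, det_transpose, hA.2, hB.2, one_mul]

theorem transpose_eq_adjugate_of_transpose_mul_self_eq_one {n α : Type*} [Fintype n]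
    [DecidableEq n] [CommRing α] {A : Matrix n n α} (hA : Aᵀ * A = 1) (hdet : A.det = 1) :
    Aᵀ = A.adjugate := by
  rw [← inv_eq_left_inv hA, inv_def, hdet, Ring.inverse_one, one_smul]

theorem SO3.trace_sub_one_le_two_mul_apply_zero_zero {A : Matrix (Fin 3) (Fin 3) ℝ}
    (hA : SO3 A) : A.trace - 1 ≤ 2 * A 0 0 := by
  have hadj := transpose_eq_adjugate_of_transpose_mul_self_eq_one hA.1 hA.2
  have hcol (j : Fin 3) : A 0 j ^ 2 + A 1 j ^ 2 + A 2 j ^ 2 = 1 := by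
    have := congrFun (congrFun hA.1 j) j
    simpa [mul_apply, Fin.sum_univ_three, sq] using this
  have hminor (j : Fin 3) : A j j = A.adjugate j j := by
    rw [← hadj, transpose_apply]
  have h00 := hminor 0
  have h11 := hminor 1
  have h22 := hminor 2
  simp only [adjugate_fin_three, of_apply, cons_val', cons_val_zero, cons_val_one,
    cons_val_two, empty_val', cons_val_fin_one, tail_cons, vecHead] at h00 h11 h22
  set p := 1 + A 0 0 - A 1 1 - A 2 2
  have hp : p * (4 - p) = (A 2 1 - A 1 2) ^ 2 + (A 0 1 + A 1 0) ^ 2 + (A 0 2 + A 2 0) ^ 2 := by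
    linear_combination -(hcol 0) - hcol 1 - hcol 2 + 2 * h00 - 2 * h11 - 2 * h22
  have hp_nonneg : 0 ≤ p := by
    nlinarith [sq_nonneg (A 2 1 - A 1 2), sq_nonneg (A 0 1 + A 1 0), sq_nonneg (A 0 2 + A 2 0)]
  rw [trace_fin_three]
  linarith

theorem mulVec_dotProduct_mulVec_eq_transpose_mul_apply (A B : Matrix (Fin 3) (Fin 3) ℝ) :
    A *ᵥ ![1, 0, 0] ⬝ᵥ B *ᵥ ![1, 0, 0] = (Bᵀ * A) 0 0 := by
  simp [dotProduct, mulVec, mul_apply, Fin.sum_univ_three]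
  ring

/-- The angle between the first columns `x = R e₁` and `m_d = R_a e₁` of two
rotation matrices is at most the rotation angle of the attitude error matrix:
`arccos(xᵀ m_d) ≤ θ(R_aᵀ R)`; equivalently `cos δ ≥ cos θ(R_aᵀ R)`. -/
theorem stmt11 (R Ra : Matrix (Fin 3) (Fin 3) ℝ) (hR : SO3 R) (hRa : SO3 Ra)
    (x md : Fin 3 → ℝ) (hx : x = R.mulVec ![1, 0, 0])
    (hmd : md = Ra.mulVec ![1, 0, 0]) :
    Real.arccos (x ⬝ᵥ md) ≤ rotAngle (Raᵀ * R) ∧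
    Real.cos (Real.arccos (x ⬝ᵥ md)) ≥ Real.cos (rotAngle (Raᵀ * R)) := by
  have hcos : ((Raᵀ * R).trace - 1) / 2 ≤ x ⬝ᵥ md := by
    rw [hx, hmd, mulVec_dotProduct_mulVec_eq_transpose_mul_apply]
    linarith [(hRa.transpose_mul hR).trace_sub_one_le_two_mul_apply_zero_zero]
  have hangle : Real.arccos (x ⬝ᵥ md) ≤ rotAngle (Raᵀ * R) := arccos_le_arccos hcos
  exact ⟨hangle, cos_le_cos_of_nonneg_of_le_pi (arccos_nonneg _) (arccos_le_pi _) hangle⟩
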